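/- arXiv:quant-ph/0310062 — 2 statements merged into one kernel-verified Lean document; each statement's English description precedes it below -/
import Mathlib

section
/- In any orthomodular lattice, the classical implication is expressible via the Sasaki implication: aᶜ ∨ b = ((b →₁ a) →₁ a) →₁ b, where →₁ is the Sasaki implication x →₁ y = xᶜ ∨ (x ∧ y). -/
class QuantumOML (α : Type*) extends Lattice α, BoundedOrder α where
  oc : α → α
  oc_involutive : ∀ a : α, oc (oc a) = a
  oc_antitone : ∀ a b : α, a ≤ b → oc b ≤ oc a
  sup_oc : ∀ a : α, a ⊔ oc a = ⊤
  inf_oc : ∀ a : α, a ⊓ oc a = ⊥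
  orthomodular : ∀ a b : α, a ≤ b → b = a ⊔ (oc a ⊓ b)

open QuantumOML

variable {α : Type*} [QuantumOML α]

/-- Sasaki implication -/
def imp1 (a b : α) : α := oc a ⊔ (a ⊓ b)

lemma oc_le_oc_iff {a b : α} : oc a ≤ oc b ↔ b ≤ a := by
  constructor
  · intro h
    have := oc_antitone _ _ h
    rwa [oc_involutive, oc_involutive] at this
  · exact oc_antitone _ _

lemma oc_sup (a b : α) : oc (a ⊔ b) = oc a ⊓ oc b := by
  apply le_antisymm
  · exact le_inf (oc_antitone _ _ le_sup_left) (oc_antitone _ _ le_sup_right)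
  · rw [← oc_involutive (oc a ⊓ oc b)]
    apply oc_antitone
    have h1 := oc_antitone _ _ (inf_le_left (a := oc a) (b := oc b))
    rw [oc_involutive] at h1
    have h2 := oc_antitone _ _ (inf_le_right (a := oc a) (b := oc b))
    rw [oc_involutive] at h2
    exact sup_le h1 h2

lemma oc_inf (a b : α) : oc (a ⊓ b) = oc a ⊔ oc b := by
  rw [← oc_involutive (oc a ⊔ oc b), oc_sup, oc_involutive, oc_involutive]

/-- dual orthomodular law -/
lemma om_dual {p q : α} (h : p ≤ q) : p = q ⊓ (oc q ⊔ p) := by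
  have h' : oc q ≤ oc p := oc_antitone _ _ h
  have := orthomodular (oc q) (oc p) h'
  have := congrArg oc this
  rwa [oc_involutive, oc_sup, oc_involutive, oc_inf, oc_involutive] at this

theorem classical_via_sasaki (a b : α) :
    oc a ⊔ b = imp1 (imp1 (imp1 b a) a) b := by
  set d : α := a ⊓ b with hd
  have hba : b ⊓ a = d := inf_comm b a
  have hx : imp1 b a = oc b ⊔ d := by rw [imp1, hba]
  -- x ⊓ a = d ⊔ (oc b ⊓ a)
  have hbd : oc b ≤ oc d := oc_antitone _ _ inf_le_right
  have hkey : oc d ⊓ (oc b ⊔ d) = oc b := by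
    have h := om_dual hbd
    rw [oc_involutive, sup_comm] at h
    exact h.symm
  have hdle : d ≤ (oc b ⊔ d) ⊓ a := le_inf le_sup_right inf_le_left
  have hxa : (oc b ⊔ d) ⊓ a = d ⊔ (oc b ⊓ a) := by
    have h1 := orthomodular d ((oc b ⊔ d) ⊓ a) hdle
    have h2 : oc d ⊓ ((oc b ⊔ d) ⊓ a) = oc b ⊓ a := by
      rw [← inf_assoc, hkey]
    rw [h2] at h1
    exact h1
  -- oc x = b ⊓ oc d
  have hocx : oc (oc b ⊔ d) = b ⊓ oc d := by
    rw [oc_sup, oc_involutive]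
  -- y = b ⊔ (oc b ⊓ a)
  have hbsplit : b = d ⊔ (oc d ⊓ b) := orthomodular d b inf_le_right
  have hy : imp1 (imp1 b a) a = b ⊔ (oc b ⊓ a) := by
    rw [hx, imp1, hocx, hxa, inf_comm b (oc d)]
    have h : oc d ⊓ b ⊔ (d ⊔ oc b ⊓ a) = (d ⊔ oc d ⊓ b) ⊔ oc b ⊓ a := by ac_rfl
    rw [h, ← hbsplit]
  rw [hy, imp1]
  have hby : b ≤ b ⊔ oc b ⊓ a := le_sup_left
  have : (b ⊔ oc b ⊓ a) ⊓ b = b := inf_eq_right.mpr hby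
  rw [this, oc_sup, oc_inf, oc_involutive]
  have hfin := orthomodular b (oc a ⊔ b) le_sup_right
  rw [hfin]
  rw [sup_comm b (oc b ⊓ (oc a ⊔ b)), sup_comm b (oc a)]
end

section
/- In any orthomodular lattice, the Dishkant implication is expressible via the non-tollens implication: a →₂ b = a →₄ (a →₄ b), where →₂ is the Dishkant implication x →₂ y = y ∨ (xᶜ ∧ yᶜ) and →₄ is the non-tollens implication x →₄ y = ((x ∧ y) ∨ (xᶜ ∧ y)) ∨ ((xᶜ ∨ y) ∧ yᶜ). -/
open QuantumOML

variable {α : Type*} [QuantumOML α]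

lemma oc_oc (x : α) : oc (oc x) = x := oc_involutive x

lemma le_oc_swap {x y : α} (h : x ≤ oc y) : y ≤ oc x := by
  have := oc_antitone _ _ h
  rwa [oc_oc] at this

lemma oc_sup_s7 (x y : α) : oc (x ⊔ y) = oc x ⊓ oc y := by
  apply le_antisymm
  · exact le_inf (oc_antitone _ _ le_sup_left) (oc_antitone _ _ le_sup_right)
  · exact le_oc_swap (sup_le (le_oc_swap inf_le_left) (le_oc_swap inf_le_right))

lemma oc_inf_s7 (x y : α) : oc (x ⊓ y) = oc x ⊔ oc y := by
  rw [← oc_oc (oc x ⊔ oc y), oc_sup_s7, oc_oc, oc_oc]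

lemma inf_oc' (x : α) : oc x ⊓ x = ⊥ := by rw [inf_comm]; exact inf_oc x

/-- Commutes -/
def Cm (x y : α) : Prop := x = (x ⊓ y) ⊔ (x ⊓ oc y)

lemma Cm_of_le {x y : α} (h : x ≤ y) : Cm x y := by
  unfold Cm
  rw [inf_eq_left.2 h]
  exact (sup_eq_left.2 inf_le_left).symm

lemma Cm_of_le_oc {x y : α} (h : x ≤ oc y) : Cm x y := by
  unfold Cm
  have h1 : x ⊓ y = ⊥ :=
    le_bot_iff.1 (le_trans (inf_le_inf_right y h) (le_of_eq (inf_oc' y)))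
  rw [h1, bot_sup_eq, inf_eq_left.2 h]

lemma Cm_oc {x y : α} (h : Cm x y) : Cm x (oc y) := by
  unfold Cm
  rw [oc_oc, sup_comm]
  exact h

/-- dual orthomodular law -/
lemma dualOM {p z : α} (h : p ≤ z) : z ⊓ (oc z ⊔ p) = p := by
  have h1 : oc z ≤ oc p := oc_antitone _ _ h
  have h2 := orthomodular _ _ h1
  have h3 := congrArg oc h2
  simp only [oc_sup_s7, oc_inf_s7, oc_oc] at h3
  exact h3.symm

lemma Cm_symm {x y : α} (h : Cm x y) : Cm y x := by
  have hd : (y ⊓ x) ⊔ (y ⊓ oc x) ≤ y := sup_le inf_le_left inf_le_left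
  have hOM := orthomodular _ _ hd
  have hkey : oc ((y ⊓ x) ⊔ (y ⊓ oc x)) ⊓ y = ⊥ := by
    have e1 : oc ((y ⊓ x) ⊔ (y ⊓ oc x)) = (oc y ⊔ oc x) ⊓ (oc y ⊔ x) := by
      rw [oc_sup_s7, oc_inf_s7, oc_inf_s7, oc_oc]
    have e2 : oc y ⊔ x = oc y ⊔ (x ⊓ y) := by
      conv_lhs => rw [h]
      rw [sup_comm (x ⊓ y) (x ⊓ oc y), ← sup_assoc]
      congr 1
      exact sup_eq_left.2 inf_le_right
    have e3 : y ⊓ (oc y ⊔ x) = x ⊓ y := by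
      rw [e2]; exact dualOM inf_le_right
    have hle : oc ((y ⊓ x) ⊔ (y ⊓ oc x)) ⊓ y ≤ (x ⊓ y) ⊓ oc (x ⊓ y) := by
      refine le_inf ?_ ?_
      · rw [← e3]
        exact le_inf inf_le_right
          (le_trans (inf_le_inf_right y (le_of_eq e1)) (le_trans inf_le_left inf_le_right))
      · rw [oc_inf_s7, sup_comm (oc x) (oc y)]
        exact le_trans (inf_le_inf_right y (le_of_eq e1)) (le_trans inf_le_left inf_le_left)
    rwa [inf_oc, le_bot_iff] at hle
  rw [hkey, sup_bot_eq] at hOM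
  exact hOM


/-- key absorption: if `Cm z x` then `oc z ⊔ oc x = oc z ⊔ (z ⊓ oc x)` and so
`z ⊓ (oc z ⊔ oc x) = z ⊓ oc x`. -/
lemma sasaki_absorb {z x : α} (h : Cm z x) : z ⊓ (oc z ⊔ oc x) = z ⊓ oc x := by
  have hx' : oc x = (oc x ⊓ z) ⊔ (oc x ⊓ oc z) := Cm_symm (Cm_oc h)
  have e2 : oc z ⊔ oc x = oc z ⊔ (oc x ⊓ z) := by
    conv_lhs => rw [hx']
    rw [sup_comm (oc x ⊓ z) (oc x ⊓ oc z), ← sup_assoc]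
    congr 1
    exact sup_eq_left.2 inf_le_right
  rw [e2]
  have := dualOM (p := oc x ⊓ z) (z := z) inf_le_right
  rw [this, inf_comm]

/-- Foulis–Holland distributivity -/
lemma FH {z x y : α} (h1 : Cm z x) (h2 : Cm z y) :
    z ⊓ (x ⊔ y) = (z ⊓ x) ⊔ (z ⊓ y) := by
  have hu : (z ⊓ x) ⊔ (z ⊓ y) ≤ z ⊓ (x ⊔ y) :=
    sup_le (le_inf inf_le_left (le_trans inf_le_right le_sup_left))
      (le_inf inf_le_left (le_trans inf_le_right le_sup_right))
  have hOM := orthomodular _ _ hu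
  have hkey : oc ((z ⊓ x) ⊔ (z ⊓ y)) ⊓ (z ⊓ (x ⊔ y)) = ⊥ := by
    have e1 : oc ((z ⊓ x) ⊔ (z ⊓ y)) = (oc z ⊔ oc x) ⊓ (oc z ⊔ oc y) := by
      rw [oc_sup_s7, oc_inf_s7, oc_inf_s7]
    have hle : oc ((z ⊓ x) ⊔ (z ⊓ y)) ⊓ (z ⊓ (x ⊔ y)) ≤ (x ⊔ y) ⊓ oc (x ⊔ y) := by
      rw [e1, oc_sup_s7]
      refine le_inf (inf_le_right.trans inf_le_right) (le_inf ?_ ?_)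
      · have t : ((oc z ⊔ oc x) ⊓ (oc z ⊔ oc y)) ⊓ (z ⊓ (x ⊔ y)) ≤ z ⊓ (oc z ⊔ oc x) :=
          le_inf (inf_le_right.trans inf_le_left) (inf_le_left.trans inf_le_left)
        exact t.trans ((sasaki_absorb h1).le.trans inf_le_right)
      · have t : ((oc z ⊔ oc x) ⊓ (oc z ⊔ oc y)) ⊓ (z ⊓ (x ⊔ y)) ≤ z ⊓ (oc z ⊔ oc y) :=
          le_inf (inf_le_right.trans inf_le_left) (inf_le_left.trans inf_le_right)
        exact t.trans ((sasaki_absorb h2).le.trans inf_le_right)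
    rwa [inf_oc, le_bot_iff] at hle
  rw [hkey, sup_bot_eq] at hOM
  exact hOM

lemma Cm_sup {z x y : α} (h1 : Cm z x) (h2 : Cm z y) : Cm z (x ⊔ y) := by
  apply Cm_symm
  have h1' : Cm (oc z) x := Cm_symm (Cm_oc (Cm_symm h1))
  have h2' : Cm (oc z) y := Cm_symm (Cm_oc (Cm_symm h2))
  have hx : x = (x ⊓ z) ⊔ (x ⊓ oc z) := Cm_symm h1
  have hy : y = (y ⊓ z) ⊔ (y ⊓ oc z) := Cm_symm h2
  unfold Cm
  rw [inf_comm (x ⊔ y) z, inf_comm (x ⊔ y) (oc z), FH h1 h2, FH h1' h2']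
  calc x ⊔ y = ((x ⊓ z) ⊔ (x ⊓ oc z)) ⊔ ((y ⊓ z) ⊔ (y ⊓ oc z)) := by rw [← hx, ← hy]
    _ = ((x ⊓ z) ⊔ (y ⊓ z)) ⊔ ((x ⊓ oc z) ⊔ (y ⊓ oc z)) := by
        rw [sup_assoc, sup_assoc]
        congr 1
        rw [← sup_assoc, ← sup_assoc, sup_comm (x ⊓ oc z) (y ⊓ z)]
    _ = ((z ⊓ x) ⊔ (z ⊓ y)) ⊔ ((oc z ⊓ x) ⊔ (oc z ⊓ y)) := by
        rw [inf_comm x z, inf_comm y z, inf_comm x (oc z), inf_comm y (oc z)]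

lemma Cm_inf {z x y : α} (h1 : Cm z x) (h2 : Cm z y) : Cm z (x ⊓ y) := by
  have := Cm_oc (Cm_sup (Cm_oc h1) (Cm_oc h2))
  rwa [oc_sup_s7, oc_oc, oc_oc] at this

lemma Cm_sup' {z x y : α} (h1 : Cm x z) (h2 : Cm y z) : Cm (x ⊔ y) z :=
  Cm_symm (Cm_sup (Cm_symm h1) (Cm_symm h2))

lemma Cm_inf' {z x y : α} (h1 : Cm x z) (h2 : Cm y z) : Cm (x ⊓ y) z :=
  Cm_symm (Cm_inf (Cm_symm h1) (Cm_symm h2))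

/-- Lemma A: absorption under commutation -/
lemma lemA {x e f : α} (h1 : Cm x e) (h2 : Cm f e) (h3 : x ⊓ f = ⊥) :
    x ⊓ (e ⊔ f) ≤ e := by
  have hs : Cm (x ⊓ (e ⊔ f)) e :=
    Cm_inf' h1 (Cm_symm (Cm_sup (Cm_of_le le_rfl) (Cm_symm h2)))
  have hfe : (e ⊔ f) ⊓ oc e ≤ f := by
    have hCe : Cm (oc e) e := Cm_of_le_oc le_rfl
    have hCf : Cm (oc e) f := Cm_symm (Cm_oc h2)
    rw [inf_comm, FH hCe hCf, inf_oc' e, bot_sup_eq]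
    exact inf_le_right
  have hbot : (x ⊓ (e ⊔ f)) ⊓ oc e = ⊥ := by
    rw [← le_bot_iff, ← h3]
    refine le_inf (le_trans inf_le_left inf_le_left) ?_
    exact le_trans (inf_le_inf_left _ (le_refl (oc e))) (le_trans (inf_le_inf_right (oc e) inf_le_right) hfe)
  calc x ⊓ (e ⊔ f) = ((x ⊓ (e ⊔ f)) ⊓ e) ⊔ ((x ⊓ (e ⊔ f)) ⊓ oc e) := hs
    _ = (x ⊓ (e ⊔ f)) ⊓ e := by rw [hbot, sup_bot_eq]
    _ ≤ e := inf_le_right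


/-- Dishkant implication -/
def imp2 (a b : α) : α := b ⊔ (oc a ⊓ oc b)

/-- non-tollens implication -/
def imp4 (a b : α) : α := ((a ⊓ b) ⊔ (oc a ⊓ b)) ⊔ ((oc a ⊔ b) ⊓ oc b)

theorem dishkant_via_nontollens (a b : α) :
    imp2 a b = imp4 a (imp4 a b) := by
  simp only [imp2, imp4]
  set e : α := (a ⊓ b) ⊔ (oc a ⊓ b) with he
  set f : α := (oc a ⊔ b) ⊓ oc b with hf
  set c : α := e ⊔ f with hc
  -- basic inequalities
  have hEb : e ≤ b := sup_le inf_le_right inf_le_right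
  have hfb' : f ≤ oc b := inf_le_right
  have hab_e : a ⊓ b ≤ e := le_sup_left
  have ha'b_e : oc a ⊓ b ≤ e := le_sup_right
  have ha'b'_f : oc a ⊓ oc b ≤ f := le_inf (inf_le_left.trans le_sup_left) inf_le_right
  have hEc : e ≤ c := le_sup_left
  have hfc : f ≤ c := le_sup_right
  have hc_a'b : c ≤ oc a ⊔ b := sup_le (hEb.trans le_sup_right) inf_le_left
  -- De Morgan computations
  have hocf : oc f = (a ⊓ oc b) ⊔ b := by rw [hf, oc_inf_s7, oc_sup_s7, oc_oc, oc_oc]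
  have hoce : oc e = (oc a ⊔ oc b) ⊓ (a ⊔ oc b) := by
    rw [he, oc_sup_s7, oc_inf_s7, oc_inf_s7, oc_oc]
  have hb_ocf : b ≤ oc f := by rw [hocf]; exact le_sup_right
  -- b ⊔ f = oc a ⊔ b
  have hbf : b ⊔ f = oc a ⊔ b := by
    calc b ⊔ f = b ⊔ ((oc a ⊔ b) ⊓ oc b) := by rw [hf]
      _ = b ⊔ (oc b ⊓ (oc a ⊔ b)) := by rw [inf_comm (oc a ⊔ b) (oc b)]
      _ = oc a ⊔ b := (orthomodular b _ le_sup_right).symm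
  have hbc : b ⊔ c = oc a ⊔ b := by
    rw [hc, ← sup_assoc, sup_eq_left.2 hEb, hbf]
  have hb'c' : oc b ⊓ oc c = a ⊓ oc b := by
    rw [← oc_sup_s7, hbc, oc_sup_s7, oc_oc]
  -- commutation of c with b
  have hCm_cb : Cm c b := Cm_sup' (Cm_of_le hEb) (Cm_of_le_oc hfb')
  have hCm_c'b : Cm (oc c) b := Cm_symm (Cm_oc (Cm_symm hCm_cb))
  have hc'_dec : oc c = (oc c ⊓ b) ⊔ (a ⊓ oc b) := by
    calc oc c = (oc c ⊓ b) ⊔ (oc c ⊓ oc b) := hCm_c'b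
      _ = (oc c ⊓ b) ⊔ (a ⊓ oc b) := by rw [inf_comm (oc c) (oc b), hb'c']
  -- a ⊓ oc c ≤ oc b, hence b ≤ oc a ⊔ c
  have haoc : a ⊓ oc c ≤ oc b := by
    have h1 : Cm a (a ⊓ oc b) := Cm_symm (Cm_of_le inf_le_left)
    have h2 : Cm (oc c ⊓ b) (a ⊓ oc b) := by
      apply Cm_of_le_oc
      rw [oc_inf_s7, oc_oc]
      exact inf_le_right.trans le_sup_right
    have h3 : a ⊓ (oc c ⊓ b) = ⊥ := by
      have hle : a ⊓ (oc c ⊓ b) ≤ (a ⊓ b) ⊓ oc (a ⊓ b) :=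
        le_inf (le_inf inf_le_left (inf_le_right.trans inf_le_right))
          ((inf_le_right.trans inf_le_left).trans (oc_antitone _ _ (hab_e.trans hEc)))
      exact le_bot_iff.1 (hle.trans (inf_oc _).le)
    have hA := lemA h1 h2 h3
    calc a ⊓ oc c = a ⊓ ((a ⊓ oc b) ⊔ (oc c ⊓ b)) := by
          rw [← sup_comm (oc c ⊓ b) (a ⊓ oc b), ← hc'_dec]
      _ ≤ a ⊓ oc b := hA
      _ ≤ oc b := inf_le_right
  have hb_a'c : b ≤ oc a ⊔ c := by
    have h := oc_antitone _ _ haoc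
    rwa [oc_oc, oc_inf_s7, oc_oc] at h
  have ha'c : oc a ⊔ c = oc a ⊔ b :=
    le_antisymm (sup_le le_sup_left hc_a'b) (sup_le le_sup_left hb_a'c)
  -- part3 : (oc a ⊔ c) ⊓ oc c = oc c ⊓ b
  have part3 : (oc a ⊔ c) ⊓ oc c = oc c ⊓ b := by
    have hCz1 : Cm (oc a ⊔ b) (oc c ⊓ b) :=
      Cm_symm (Cm_of_le (inf_le_right.trans le_sup_right))
    have hCz2 : Cm (oc a ⊔ b) (a ⊓ oc b) := by
      apply Cm_symm; apply Cm_of_le_oc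
      rw [oc_sup_s7, oc_oc]
    have hzero : (oc a ⊔ b) ⊓ (a ⊓ oc b) = ⊥ := by
      have h2 : a ⊓ oc b = oc (oc a ⊔ b) := by rw [oc_sup_s7, oc_oc]
      rw [h2, inf_oc]
    have key : (oc a ⊔ b) ⊓ oc c = oc c ⊓ b := by
      conv_lhs => rw [hc'_dec]
      rw [FH hCz1 hCz2, hzero, sup_bot_eq,
        inf_eq_right.2 (inf_le_right.trans le_sup_right : oc c ⊓ b ≤ oc a ⊔ b)]
    rw [ha'c, key]
  -- b = e ⊔ (oc c ⊓ b)
  have b_dec : b = e ⊔ (oc c ⊓ b) := by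
    have h1 := orthomodular e b hEb
    have h2 : oc c ⊓ b = oc e ⊓ b := by
      calc oc c ⊓ b = (oc e ⊓ oc f) ⊓ b := by rw [hc, oc_sup_s7]
        _ = oc e ⊓ (oc f ⊓ b) := by rw [inf_assoc]
        _ = oc e ⊓ b := by rw [inf_eq_right.2 hb_ocf]
    rw [h2]; exact h1
  -- a ⊓ c ≤ e
  have hac_le_e : a ⊓ c ≤ e := by
    have hCm_a_e : Cm a e := by
      rw [he]
      exact Cm_sup (Cm_symm (Cm_of_le inf_le_left)) (Cm_symm (Cm_of_le_oc inf_le_left))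
    have hCm_f_e : Cm f e := by
      apply Cm_of_le_oc
      rw [hoce]
      exact le_inf (hfb'.trans le_sup_right) (hfb'.trans le_sup_right)
    have haf : a ⊓ f = ⊥ := by
      have h1 : a ⊓ f ≤ (oc a ⊔ b) ⊓ (a ⊓ oc b) :=
        le_inf (inf_le_right.trans inf_le_left)
          (le_inf inf_le_left (inf_le_right.trans inf_le_right))
      have h2 : a ⊓ oc b = oc (oc a ⊔ b) := by rw [oc_sup_s7, oc_oc]
      rw [h2] at h1
      exact le_bot_iff.1 (h1.trans (inf_oc _).le)
    rw [hc]
    exact lemA hCm_a_e hCm_f_e haf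
  -- oc a ⊓ c ≤ (oc a ⊓ b) ⊔ (oc a ⊓ oc b)
  set m : α := (oc a ⊓ b) ⊔ (oc a ⊓ oc b) with hm
  have hocm : oc m = (a ⊔ oc b) ⊓ (a ⊔ b) := by
    rw [hm, oc_sup_s7, oc_inf_s7, oc_inf_s7, oc_oc, oc_oc]
  have ha'c_le_m : oc a ⊓ c ≤ m := by
    have hCm_s_m : Cm (oc a ⊓ c) m := by
      have hCm_a'_m : Cm (oc a) m := by
        rw [hm]
        exact Cm_sup (Cm_symm (Cm_of_le inf_le_left)) (Cm_symm (Cm_of_le inf_le_left))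
      have hCm_c_m : Cm c m := by
        apply Cm_symm; apply Cm_of_le
        rw [hm]
        exact sup_le (ha'b_e.trans hEc) (ha'b'_f.trans hfc)
      exact Cm_inf' hCm_a'_m hCm_c_m
    -- c ⊓ oc m = (a ⊓ b) ⊔ ((a ⊔ b) ⊓ f)
    have hCm_ab'_e : Cm (a ⊔ oc b) e := by
      rw [he]
      refine Cm_sup (Cm_symm (Cm_of_le (inf_le_left.trans le_sup_left))) ?_
      apply Cm_symm; apply Cm_of_le_oc
      rw [oc_sup_s7, oc_oc]
    have hCm_ab_e : Cm (a ⊔ b) e := Cm_symm (Cm_of_le (hEb.trans le_sup_right))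
    have hCm_ab'_f : Cm (a ⊔ oc b) f :=
      Cm_symm (Cm_of_le (hfb'.trans le_sup_right))
    have hCm_ab_f : Cm (a ⊔ b) f := by
      have t : Cm f (oc (oc a ⊓ oc b)) := Cm_oc (Cm_symm (Cm_of_le ha'b'_f))
      rw [oc_inf_s7, oc_oc, oc_oc] at t
      exact Cm_symm t
    have hCm_om_e : Cm (oc m) e := by
      rw [hocm]; exact Cm_inf' hCm_ab'_e hCm_ab_e
    have hCm_om_f : Cm (oc m) f := by
      rw [hocm]; exact Cm_inf' hCm_ab'_f hCm_ab_f
    have hom_e : oc m ⊓ e = a ⊓ b := by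
      have h1 : (a ⊔ b) ⊓ e = e := inf_eq_right.2 (hEb.trans le_sup_right)
      have h2 : (a ⊔ oc b) ⊓ (a ⊓ b) = a ⊓ b :=
        inf_eq_right.2 (inf_le_left.trans le_sup_left)
      have h3 : (a ⊔ oc b) ⊓ (oc a ⊓ b) = ⊥ := by
        have : oc a ⊓ b = oc (a ⊔ oc b) := by rw [oc_sup_s7, oc_oc]
        rw [this, inf_oc]
      have hC1 : Cm (a ⊔ oc b) (a ⊓ b) :=
        Cm_symm (Cm_of_le (inf_le_left.trans le_sup_left))
      have hC2 : Cm (a ⊔ oc b) (oc a ⊓ b) := by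
        apply Cm_symm; apply Cm_of_le_oc
        rw [oc_sup_s7, oc_oc]
      calc oc m ⊓ e = (a ⊔ oc b) ⊓ ((a ⊔ b) ⊓ e) := by rw [hocm, inf_assoc]
        _ = (a ⊔ oc b) ⊓ e := by rw [h1]
        _ = (a ⊔ oc b) ⊓ ((a ⊓ b) ⊔ (oc a ⊓ b)) := by rw [he]
        _ = ((a ⊔ oc b) ⊓ (a ⊓ b)) ⊔ ((a ⊔ oc b) ⊓ (oc a ⊓ b)) := FH hC1 hC2
        _ = a ⊓ b := by rw [h2, h3, sup_bot_eq]
    have hom_f : oc m ⊓ f = (a ⊔ b) ⊓ f := by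
      have h1 : (a ⊔ b) ⊓ f ≤ a ⊔ oc b := inf_le_right.trans (hfb'.trans le_sup_right)
      calc oc m ⊓ f = (a ⊔ oc b) ⊓ ((a ⊔ b) ⊓ f) := by rw [hocm, inf_assoc]
        _ = (a ⊔ b) ⊓ f := inf_eq_right.2 h1
    have hcm' : c ⊓ oc m = (a ⊓ b) ⊔ ((a ⊔ b) ⊓ f) := by
      calc c ⊓ oc m = oc m ⊓ (e ⊔ f) := by rw [inf_comm, hc]
        _ = (oc m ⊓ e) ⊔ (oc m ⊓ f) := FH hCm_om_e hCm_om_f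
        _ = (a ⊓ b) ⊔ ((a ⊔ b) ⊓ f) := by rw [hom_e, hom_f]
    have w0 : (oc a ⊓ c) ⊓ oc m = ⊥ := by
      have h1 : Cm (oc a) (a ⊓ b) := by
        apply Cm_symm; apply Cm_of_le_oc
        rw [oc_oc]; exact inf_le_left
      have h2 : Cm ((a ⊔ b) ⊓ f) (a ⊓ b) := by
        apply Cm_of_le_oc
        rw [oc_inf_s7]
        exact inf_le_right.trans (hfb'.trans le_sup_right)
      have h3 : oc a ⊓ ((a ⊔ b) ⊓ f) = ⊥ := by
        have hle : oc a ⊓ ((a ⊔ b) ⊓ f) ≤ (a ⊔ b) ⊓ oc (a ⊔ b) := by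
          rw [oc_sup_s7]
          exact le_inf (inf_le_right.trans inf_le_left)
            (le_inf inf_le_left ((inf_le_right.trans inf_le_right).trans hfb'))
        exact le_bot_iff.1 (hle.trans (inf_oc _).le)
      have w1 : oc a ⊓ (c ⊓ oc m) ≤ a ⊓ b := by
        rw [hcm']; exact lemA h1 h2 h3
      have w2 : oc a ⊓ (c ⊓ oc m) ≤ oc a ⊓ a := le_inf inf_le_left (w1.trans inf_le_left)
      rw [inf_assoc]
      exact le_bot_iff.1 (w2.trans (inf_oc' a).le)
    calc oc a ⊓ c = ((oc a ⊓ c) ⊓ m) ⊔ ((oc a ⊓ c) ⊓ oc m) := hCm_s_m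
      _ = (oc a ⊓ c) ⊓ m := by rw [w0, sup_bot_eq]
      _ ≤ m := inf_le_right
  -- final assembly
  apply le_antisymm
  · refine sup_le ?_ ?_
    · rw [b_dec]
      refine sup_le ?_ (part3.ge.trans le_sup_right)
      refine le_trans ?_ le_sup_left
      rw [he]
      exact sup_le (le_trans (le_inf inf_le_left (hab_e.trans hEc)) le_sup_left)
        (le_trans (le_inf inf_le_left (ha'b_e.trans hEc)) le_sup_right)
    · exact le_trans (le_inf inf_le_left (ha'b'_f.trans hfc))
        (le_trans le_sup_right le_sup_left)
  · refine sup_le (sup_le ?_ ?_) ?_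
    · exact (hac_le_e.trans hEb).trans le_sup_left
    · refine ha'c_le_m.trans ?_
      rw [hm]
      exact sup_le (inf_le_right.trans le_sup_left) le_sup_right
    · exact part3.le.trans (inf_le_right.trans le_sup_left)
end
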